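/- Let α, Δ > 0, K a positive integer, and E_1, ..., E_K ≥ 0. With Σ_k^{-2} = α/(Δ+E_k), Σ_mf^{-2} = (1/K)Σ_k Σ_k^{-2}, and ψ(E;Δ) = (α/2)(ln(1+E/Δ) − E/(Δ+E)), one has (1/K)Σ_{k=1}^K ψ(E_k;Δ) ≥ ψ(α/Σ_mf^{-2} − Δ; Δ). -/

import Mathlib

/-!
Writing `x = α / (Δ + E)` for the precision, `ψ(α/x − Δ; Δ)` is
`(α/2)(log α − log Δ − 1) − (α/2) log x + (Δ/2) x`, a convex function of `x > 0`.
Jensen's inequality for it with uniform weights `1/K` is the claim.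
-/

/-- The RS potential function `ψ(E;Δ) = (α/2)(ln(1+E/Δ) − E/(Δ+E))` of random linear
estimation. -/
noncomputable def psiRLE (α Δ E : ℝ) : ℝ :=
  (α / 2) * (Real.log (1 + E / Δ) - E / (Δ + E))

open Finset Real

lemma psiRLE_div_sub (α Δ t : ℝ) (hα : α ≠ 0) (hΔ : Δ ≠ 0) (ht : t ≠ 0) :
    psiRLE α Δ (α / t - Δ)
      = (α / 2) * (log α - log Δ - 1) - (α / 2) * log t + (Δ / 2) * t := by
  have h_ratio : 1 + (α / t - Δ) / Δ = α / (t * Δ) := by field_simp; ring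
  have h_sum : Δ + (α / t - Δ) = α / t := by ring
  have h_frac : (α / t - Δ) / (α / t) = 1 - Δ * t / α := by field_simp
  rw [psiRLE, h_ratio, h_sum, h_frac, log_div hα (mul_ne_zero ht hΔ), log_mul ht hΔ]
  field_simp
  ring

lemma convexOn_psiRLE_div_sub (α Δ : ℝ) (hα : 0 < α) (hΔ : Δ ≠ 0) :
    ConvexOn ℝ (Set.Ioi 0) fun x => psiRLE α Δ (α / x - Δ) := by
  have h_log : ConvexOn ℝ (Set.Ioi 0) fun x => (α / 2) * -log x :=
    strictConcaveOn_log_Ioi.concaveOn.neg.smul (by positivity)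
  have h_lin : ConvexOn ℝ (Set.Ioi 0) fun x : ℝ => (Δ / 2) * x :=
    (LinearMap.mul ℝ ℝ (Δ / 2)).convexOn (convex_Ioi 0)
  refine ((h_log.add h_lin).add_const ((α / 2) * (log α - log Δ - 1))).congr fun x hx => ?_
  rw [psiRLE_div_sub α Δ x hα.ne' hΔ (Set.mem_Ioi.mp hx).ne']
  simp only [Pi.add_apply]
  ring

/-- Jensen's inequality for the RLE potential: with `Σₖ⁻² = α/(Δ+Eₖ)`,
`Σ_mf⁻² = (1/K)∑ₖ Σₖ⁻²`, one has `(1/K)∑ₖ ψ(Eₖ;Δ) ≥ ψ(α/Σ_mf⁻² − Δ; Δ)`. -/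
theorem psi_jensen (α Δ : ℝ) (hα : 0 < α) (hΔ : 0 < Δ) (K : ℕ) (hK : 0 < K)
    (E : Fin K → ℝ) (hE : ∀ k, 0 ≤ E k) :
    psiRLE α Δ (α / ((1 / (K : ℝ)) * ∑ k, α / (Δ + E k)) - Δ)
      ≤ (1 / (K : ℝ)) * ∑ k, psiRLE α Δ (E k) := by
  have h_noise : ∀ k, 0 < Δ + E k := fun k => by linarith [hE k]
  have h_prec : ∀ k, α / (α / (Δ + E k)) - Δ = E k := fun k => by
    rw [div_div_cancel₀ hα.ne']
    ring
  have h_weights : ∑ _k : Fin K, 1 / (K : ℝ) = 1 := by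
    rw [sum_const, card_univ, Fintype.card_fin, nsmul_eq_mul]
    field_simp
  have h_jensen := (convexOn_psiRLE_div_sub α Δ hα hΔ.ne').map_sum_le
    (t := univ) (p := fun k => α / (Δ + E k)) (fun _ _ => by positivity) h_weights
    (fun k _ => div_pos hα (h_noise k))
  simpa only [smul_eq_mul, ← mul_sum, h_prec] using h_jensen
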